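/- Let B > 0 and ω_i, ω_j > 0 with 2ω_i < B and 2ω_j < B. Let F_i and F_j be independent real random variables uniformly distributed on [ω_i, B − ω_i] and [ω_j, B − ω_j], respectively. Then for every real x: P(|F_i − F_j| ≤ x) = 0 if x < 0; P(|F_i − F_j| ≤ x) = 2x/(B − 2·min(ω_i, ω_j)) if 0 ≤ x < |ω_j − ω_i|; P(|F_i − F_j| ≤ x) = (−x² + 2x(B − ω_j − ω_i) − (ω_j − ω_i)²)/((B − 2ω_i)(B − 2ω_j)) if |ω_j − ω_i| ≤ x < B − ω_i − ω_j; and P(|F_i − F_j| ≤ x) = 1 if x ≥ B − ω_j − ω_i. -/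

import Mathlib

/-!
By independence, `P(|Fi - Fj| ≤ x)` is the area of the band `|a - b| ≤ x` inside the rectangle
`[ωi, B - ωi] × [ωj, B - ωj]`, divided by the area of the rectangle. For `x ≥ 0` the slice of the
band over `a` meets `[c, d]` in length `G(a + x) - G(a - x)`, where `G t = (t - c)⁺ - (t - d)⁺`;
integrating these ramps in `a` expresses the area through eight values of their primitive
`s ↦ (s⁺)² / 2` (`bandArea`). In each regime of `x` the sign of every argument is known,
and the area becomes the paper's polynomial.
-/

open MeasureTheory ProbabilityTheory Set

noncomputable def rampPrimitive (s : ℝ) : ℝ := max s 0 ^ 2 / 2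

lemma rampPrimitive_of_nonneg {s : ℝ} (hs : 0 ≤ s) : rampPrimitive s = s ^ 2 / 2 := by
  rw [rampPrimitive, max_eq_left hs]

lemma rampPrimitive_of_nonpos {s : ℝ} (hs : s ≤ 0) : rampPrimitive s = 0 := by
  simp [rampPrimitive, max_eq_right hs]

lemma integral_max_zero (s : ℝ) : ∫ t in 0..s, max t 0 = rampPrimitive s := by
  rcases le_total 0 s with hs | hs
  · rw [rampPrimitive_of_nonneg hs, intervalIntegral.integral_congr (g := fun t => t), integral_id]
    · ring
    · intro t ht
      rw [uIcc_of_le hs] at ht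
      exact max_eq_left ht.1
  · rw [rampPrimitive_of_nonpos hs, intervalIntegral.integral_congr (g := fun _ => (0 : ℝ)),
      intervalIntegral.integral_zero]
    intro t ht
    rw [uIcc_of_ge hs] at ht
    exact max_eq_right ht.2

lemma integral_max_sub_zero (u v e : ℝ) :
    ∫ a in u..v, max (a - e) 0 = rampPrimitive (v - e) - rampPrimitive (u - e) := by
  have hint : ∀ p q : ℝ, IntervalIntegrable (fun t : ℝ => max t 0) volume p q :=
    fun p q => (by fun_prop : Continuous fun t : ℝ => max t 0).intervalIntegrable p q
  rw [intervalIntegral.integral_comp_sub_right (fun t => max t 0),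
    ← integral_max_zero, ← integral_max_zero,
    intervalIntegral.integral_interval_sub_left (hint _ _) (hint _ _)]

lemma prodMk_preimage_abs_sub_le (a x : ℝ) :
    Prod.mk a ⁻¹' {p : ℝ × ℝ | |p.1 - p.2| ≤ x} = Icc (a - x) (a + x) := by
  ext b
  simp only [mem_preimage, mem_ofPred_eq, mem_Icc, abs_le]
  constructor <;> rintro ⟨h, h'⟩ <;> constructor <;> linarith

lemma max_min_sub_max_zero_eq {c d x : ℝ} (hcd : c ≤ d) (hx : 0 ≤ x) (a : ℝ) :
    max (min (a + x) d - max (a - x) c) 0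
      = max (a - (c - x)) 0 - max (a - (d - x)) 0
        - (max (a - (c + x)) 0 - max (a - (d + x)) 0) := by
  grind

noncomputable def bandArea (a₁ b₁ a₂ b₂ x : ℝ) : ℝ :=
  (rampPrimitive (b₁ - (a₂ - x)) - rampPrimitive (a₁ - (a₂ - x)))
    - (rampPrimitive (b₁ - (b₂ - x)) - rampPrimitive (a₁ - (b₂ - x)))
    - ((rampPrimitive (b₁ - (a₂ + x)) - rampPrimitive (a₁ - (a₂ + x)))
      - (rampPrimitive (b₁ - (b₂ + x)) - rampPrimitive (a₁ - (b₂ + x))))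

lemma prod_restrict_Icc_abs_sub_le {a₁ b₁ a₂ b₂ x : ℝ} (h₁ : a₁ ≤ b₁) (h₂ : a₂ ≤ b₂)
    (hx : 0 ≤ x) :
    (volume.restrict (Icc a₁ b₁)).prod (volume.restrict (Icc a₂ b₂))
      {p : ℝ × ℝ | |p.1 - p.2| ≤ x} = ENNReal.ofReal (bandArea a₁ b₁ a₂ b₂ x) := by
  set g : ℝ → ℝ := fun a => max (min (a + x) b₂ - max (a - x) a₂) 0 with hg
  have hslice : ∀ a, volume.restrict (Icc a₂ b₂) (Prod.mk a ⁻¹' {p : ℝ × ℝ | |p.1 - p.2| ≤ x})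
      = ENNReal.ofReal (g a) := by
    intro a
    rw [prodMk_preimage_abs_sub_le, Measure.restrict_apply measurableSet_Icc, Icc_inter_Icc,
      Real.volume_Icc, hg, ENNReal.ofReal_max, ENNReal.ofReal_zero, max_eq_left zero_le]
  have hg_cont : Continuous g := by fun_prop
  have hint : ∀ e u v : ℝ, IntervalIntegrable (fun a : ℝ => max (a - e) 0) volume u v :=
    fun e u v => (by fun_prop : Continuous fun a : ℝ => max (a - e) 0).intervalIntegrable u v
  rw [Measure.prod_apply (isClosed_le (by fun_prop) continuous_const).measurableSet]
  simp_rw [hslice]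
  rw [← ofReal_integral_eq_lintegral_ofReal hg_cont.integrableOn_Icc
      (Filter.Eventually.of_forall fun a => le_max_right _ _),
    integral_Icc_eq_integral_Ioc, ← intervalIntegral.integral_of_le h₁]
  simp_rw [hg, max_min_sub_max_zero_eq h₂ hx]
  rw [intervalIntegral.integral_sub ((hint _ _ _).sub (hint _ _ _))
      ((hint _ _ _).sub (hint _ _ _)),
    intervalIntegral.integral_sub (hint _ _ _) (hint _ _ _),
    intervalIntegral.integral_sub (hint _ _ _) (hint _ _ _)]
  simp only [integral_max_sub_zero, bandArea]

lemma measure_abs_sub_le_of_uniform {Ω : Type*} [MeasurableSpace Ω] {P : Measure Ω}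
    [IsFiniteMeasure P] {X Y : Ω → ℝ} {a₁ b₁ a₂ b₂ x : ℝ} (h₁ : a₁ < b₁) (h₂ : a₂ < b₂)
    (hX : Measurable X) (hY : Measurable Y) (hXY : IndepFun X Y P)
    (hXu : P.map X = (ENNReal.ofReal (b₁ - a₁))⁻¹ • volume.restrict (Icc a₁ b₁))
    (hYu : P.map Y = (ENNReal.ofReal (b₂ - a₂))⁻¹ • volume.restrict (Icc a₂ b₂))
    (hx : 0 ≤ x) :
    P {ω | |X ω - Y ω| ≤ x} =
      ENNReal.ofReal (bandArea a₁ b₁ a₂ b₂ x / ((b₁ - a₁) * (b₂ - a₂))) := by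
  have hS : MeasurableSet {p : ℝ × ℝ | |p.1 - p.2| ≤ x} :=
    (isClosed_le (by fun_prop) continuous_const).measurableSet
  have hc₁ : 0 < b₁ - a₁ := sub_pos.2 h₁
  have hc₂ : 0 < b₂ - a₂ := sub_pos.2 h₂
  change P ((fun ω => (X ω, Y ω)) ⁻¹' {p : ℝ × ℝ | |p.1 - p.2| ≤ x}) = _
  rw [← Measure.map_apply (hX.prodMk hY) hS,
    (indepFun_iff_map_prod_eq_prod_map_map hX.aemeasurable hY.aemeasurable).1 hXY, hXu, hYu,
    Measure.prod_smul_left, Measure.prod_smul_right, Measure.smul_apply, Measure.smul_apply,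
    prod_restrict_Icc_abs_sub_le h₁.le h₂.le hx, ← ENNReal.ofReal_inv_of_pos hc₁,
    ← ENNReal.ofReal_inv_of_pos hc₂, smul_eq_mul, smul_eq_mul,
    ← ENNReal.ofReal_mul (by positivity), ← ENNReal.ofReal_mul (by positivity)]
  congr 1
  field_simp

section Concentric

variable {B ωi ωj x : ℝ}

lemma bandArea_concentric_of_le_abs (hBi : 2 * ωi ≤ B) (hBj : 2 * ωj ≤ B) (hx₀ : 0 ≤ x)
    (hx : x ≤ |ωj - ωi|) :
    bandArea ωi (B - ωi) ωj (B - ωj) x = 2 * x * (B - 2 * max ωi ωj) := by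
  rcases le_total ωi ωj with h | h
  · rw [abs_of_nonneg (sub_nonneg.2 h)] at hx
    simp (disch := grind) only [bandArea, rampPrimitive_of_nonneg, rampPrimitive_of_nonpos,
      max_eq_right h]
    ring
  · rw [abs_of_nonpos (sub_nonpos.2 h)] at hx
    simp (disch := grind) only [bandArea, rampPrimitive_of_nonneg, rampPrimitive_of_nonpos,
      max_eq_left h]
    ring

lemma bandArea_concentric_of_abs_le_of_le (hx₁ : |ωj - ωi| ≤ x) (hx₂ : x ≤ B - ωi - ωj) :
    bandArea ωi (B - ωi) ωj (B - ωj) x = -x ^ 2 + 2 * x * (B - ωj - ωi) - (ωj - ωi) ^ 2 := by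
  obtain ⟨hl, hr⟩ := abs_le.1 hx₁
  simp (disch := grind) only [bandArea, rampPrimitive_of_nonneg, rampPrimitive_of_nonpos]
  ring

lemma bandArea_concentric_of_le (hBi : 2 * ωi ≤ B) (hBj : 2 * ωj ≤ B)
    (hx : B - ωi - ωj ≤ x) :
    bandArea ωi (B - ωi) ωj (B - ωj) x = (B - 2 * ωi) * (B - 2 * ωj) := by
  simp (disch := grind) only [bandArea, rampPrimitive_of_nonneg, rampPrimitive_of_nonpos]
  ring

end Concentric

theorem stmt3_general {Ω : Type*} [MeasurableSpace Ω] (P : Measure Ω)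
    [IsProbabilityMeasure P]
    (B ωi ωj : ℝ)
    (hBi : 2 * ωi < B) (hBj : 2 * ωj < B)
    (Fi Fj : Ω → ℝ) (hFi : Measurable Fi) (hFj : Measurable Fj)
    (hindep : IndepFun Fi Fj P)
    (hunifi : Measure.map Fi P =
      (ENNReal.ofReal (B - 2 * ωi))⁻¹ • volume.restrict (Set.Icc ωi (B - ωi)))
    (hunifj : Measure.map Fj P =
      (ENNReal.ofReal (B - 2 * ωj))⁻¹ • volume.restrict (Set.Icc ωj (B - ωj)))
    (x : ℝ) :
    (x < 0 → P {a | |Fi a - Fj a| ≤ x} = 0) ∧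
    (0 ≤ x → x < |ωj - ωi| →
      P {a | |Fi a - Fj a| ≤ x} =
        ENNReal.ofReal (2 * x / (B - 2 * min ωi ωj))) ∧
    (|ωj - ωi| ≤ x → x < B - ωi - ωj →
      P {a | |Fi a - Fj a| ≤ x} =
        ENNReal.ofReal ((-x ^ 2 + 2 * x * (B - ωj - ωi) - (ωj - ωi) ^ 2) /
          ((B - 2 * ωi) * (B - 2 * ωj)))) ∧
    (B - ωj - ωi ≤ x → P {a | |Fi a - Fj a| ≤ x} = 1) := by
  rw [show B - 2 * ωi = B - ωi - ωi by ring] at hunifi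
  rw [show B - 2 * ωj = B - ωj - ωj by ring] at hunifj
  have hP : ∀ y, 0 ≤ y → P {a | |Fi a - Fj a| ≤ y} = ENNReal.ofReal
      (bandArea ωi (B - ωi) ωj (B - ωj) y / ((B - 2 * ωi) * (B - 2 * ωj))) := fun y hy => by
    rw [measure_abs_sub_le_of_uniform (by linarith) (by linarith) hFi hFj hindep hunifi hunifj hy,
      show B - ωi - ωi = B - 2 * ωi by ring, show B - ωj - ωj = B - 2 * ωj by ring]
  refine ⟨fun hx => ?_, fun hx₀ hx => ?_, fun hx₁ hx₂ => ?_, fun hx => ?_⟩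
  · convert measure_empty (μ := P)
    exact eq_empty_of_forall_notMem fun a ha => ((abs_nonneg _).trans ha).not_gt hx
  · have hci : B - 2 * ωi ≠ 0 := by linarith
    have hcj : B - 2 * ωj ≠ 0 := by linarith
    rw [hP x hx₀, bandArea_concentric_of_le_abs hBi.le hBj.le hx₀ hx.le]
    congr 1
    rcases le_total ωi ωj with h | h
    · rw [max_eq_right h, min_eq_left h]; field_simp
    · rw [max_eq_left h, min_eq_right h]; field_simp
  · rw [hP x ((abs_nonneg _).trans hx₁), bandArea_concentric_of_abs_le_of_le hx₁ hx₂.le]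
  · rw [hP x (by linarith), bandArea_concentric_of_le hBi.le hBj.le (by linarith),
      div_self (by nlinarith), ENNReal.ofReal_one]

/-- CDF of the central-frequency difference of two simultaneously transmitted
narrow packets, whose central frequencies are independent and uniform on
`[ω_i, B - ω_i]` and `[ω_j, B - ω_j]`: case 4, equation (12) of the paper. -/
theorem stmt3 {Ω : Type*} [MeasurableSpace Ω] (P : Measure Ω)
    [IsProbabilityMeasure P]
    (B ωi ωj : ℝ) (hωi : 0 < ωi) (hωj : 0 < ωj)
    (hBi : 2 * ωi < B) (hBj : 2 * ωj < B)
    (Fi Fj : Ω → ℝ) (hFi : Measurable Fi) (hFj : Measurable Fj)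
    (hindep : IndepFun Fi Fj P)
    (hunifi : Measure.map Fi P =
      (ENNReal.ofReal (B - 2 * ωi))⁻¹ • volume.restrict (Set.Icc ωi (B - ωi)))
    (hunifj : Measure.map Fj P =
      (ENNReal.ofReal (B - 2 * ωj))⁻¹ • volume.restrict (Set.Icc ωj (B - ωj)))
    (x : ℝ) :
    (x < 0 → P {a | |Fi a - Fj a| ≤ x} = 0) ∧
    (0 ≤ x → x < |ωj - ωi| →
      P {a | |Fi a - Fj a| ≤ x} =
        ENNReal.ofReal (2 * x / (B - 2 * min ωi ωj))) ∧
    (|ωj - ωi| ≤ x → x < B - ωi - ωj →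
      P {a | |Fi a - Fj a| ≤ x} =
        ENNReal.ofReal ((-x ^ 2 + 2 * x * (B - ωj - ωi) - (ωj - ωi) ^ 2) /
          ((B - 2 * ωi) * (B - 2 * ωj)))) ∧
    (B - ωj - ωi ≤ x → P {a | |Fi a - Fj a| ≤ x} = 1) :=
  stmt3_general P B ωi ωj hBi hBj Fi Fj hFi hFj hindep hunifi hunifj x
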